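/- Let n ≥ 3, h ∈ {0,...,n}, and let E be the fan-out ordering from dimension h for a chain of length n. Then among all orderings, E is the unique one whose triplet set has h appearing in every one of its n−1 triplets. -/
import Mathlib


/-- Full parenthesisations of the subchain `M_{a+1} ⋯ M_c`. -/
inductive Paren : ℕ → ℕ → Type
  | leaf (i : ℕ) : Paren i (i + 1)
  | node {a b c : ℕ} : Paren a b → Paren b c → Paren a c

/-- The set of index triplets of the multiplications of a parenthesisation. -/
def Paren.triplets : ∀ {a c : ℕ}, Paren a c → Finset (ℕ × ℕ × ℕ)
  | _, _, .leaf _ => ∅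
  | _, _, @Paren.node a b c l r => l.triplets ∪ r.triplets ∪ {(a, b, c)}

/-- `x` appears in the triplet `t`. -/
def memT (x : ℕ) (t : ℕ × ℕ × ℕ) : Prop :=
  x = t.1 ∨ x = t.2.1 ∨ x = t.2.2

/-- The triplet set of the fan-out ordering from dimension `h` of the chain
`M₁ ⋯ M_n`: `{(i-1,i,h) : 1 ≤ i ≤ h-1} ∪ {(h,i-1,i) : h+2 ≤ i ≤ n} ∪ {(0,h,n)}`
(for `0 < h < n`, and the corresponding degenerate sets for `h = 0`, `h = n`). -/
def fanSet (n h : ℕ) : Finset (ℕ × ℕ × ℕ) :=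
  if h = 0 then (Finset.Icc 2 n).image (fun i => (0, i - 1, i))
  else if h = n then (Finset.Icc 1 (n - 1)).image (fun i => (i - 1, i, n))
  else ((Finset.Icc 1 (h - 1)).image fun i => (i - 1, i, h)) ∪
       ((Finset.Icc (h + 2) n).image fun i => (h, i - 1, i)) ∪ {(0, h, n)}


theorem Paren.lt : ∀ {a c : ℕ}, Paren a c → a < c
  | _, _, .leaf _ => Nat.lt_succ_self _
  | _, _, .node l r => Nat.lt_trans l.lt r.lt

def Paren.cast {a c c' : ℕ} (e : c = c') (p : Paren a c) : Paren a c' := e ▸ p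

theorem triplets_cast {a c c' : ℕ} (e : c = c') (p : Paren a c) :
    (Paren.cast e p).triplets = p.triplets := by subst e; rfl

def leftChain (a c : ℕ) (h : a < c) : Paren a c :=
  if hc : a + 1 = c then Paren.cast hc (Paren.leaf a)
  else .node (leftChain a (c-1) (by omega))
    (Paren.cast (by omega : (c-1)+1 = c) (Paren.leaf (c-1)))
termination_by c - a
decreasing_by omega

def rightChain (a c : ℕ) (h : a < c) : Paren a c :=
  if hc : a + 1 = c then Paren.cast hc (Paren.leaf a)
  else .node (.leaf a) (rightChain (a+1) c (by omega))
termination_by c - a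
decreasing_by omega

theorem leftChain_triplets (a c : ℕ) (h : a < c) :
    (leftChain a c h).triplets = (Finset.Icc (a+2) c).image (fun i => (a, i-1, i)) := by
  rw [leftChain]
  split
  · next hc =>
    rw [triplets_cast]
    have : Finset.Icc (a+2) c = ∅ := Finset.Icc_eq_empty (by omega)
    simp [Paren.triplets, this]
  · next hc =>
    have h2 : a < c - 1 := by omega
    rw [Paren.triplets, triplets_cast, leftChain_triplets a (c-1) h2]
    ext t
    simp only [Finset.mem_union, Finset.mem_image, Finset.mem_Icc, Paren.triplets,
      Finset.notMem_empty, false_or, Finset.mem_singleton, Finset.union_empty]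
    constructor
    · rintro (⟨i, ⟨h1, h2⟩, rfl⟩ | rfl)
      · exact ⟨i, ⟨h1, by omega⟩, rfl⟩
      · exact ⟨c, ⟨by omega, le_refl c⟩, rfl⟩
    · rintro ⟨i, ⟨h1, h2⟩, rfl⟩
      rcases eq_or_lt_of_le h2 with rfl | hlt
      · right; rfl
      · left; exact ⟨i, ⟨h1, by omega⟩, rfl⟩
termination_by c - a
decreasing_by omega

theorem rightChain_triplets (a c : ℕ) (h : a < c) :
    (rightChain a c h).triplets = (Finset.Icc (a+1) (c-1)).image (fun i => (i-1, i, c)) := by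
  rw [rightChain]
  split
  · next hc =>
    rw [triplets_cast]
    have : Finset.Icc (a+1) (c-1) = ∅ := Finset.Icc_eq_empty (by omega)
    simp [Paren.triplets, this]
  · next hc =>
    have h2 : a + 1 < c := by omega
    rw [Paren.triplets, rightChain_triplets (a+1) c h2]
    ext t
    simp only [Finset.mem_union, Finset.mem_image, Finset.mem_Icc, Paren.triplets,
      Finset.notMem_empty, false_or, Finset.mem_singleton, Finset.empty_union]
    constructor
    · rintro (⟨i, ⟨h1, h3⟩, rfl⟩ | rfl)
      · exact ⟨i, ⟨by omega, h3⟩, rfl⟩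
      · exact ⟨a+1, ⟨le_refl _, by omega⟩, by simp⟩
    · rintro ⟨i, ⟨h1, h3⟩, rfl⟩
      rcases eq_or_lt_of_le h1 with rfl | hlt
      · right; simp
      · left; exact ⟨i, ⟨by omega, h3⟩, rfl⟩
termination_by c - a
decreasing_by omega

theorem eq_leftChain : ∀ {a c : ℕ} (p : Paren a c), (∀ t ∈ p.triplets, memT a t) →
    ∀ (hac : a < c), p = leftChain a c hac := by
  intro a c p
  induction p with
  | leaf i =>
    intro _ hac
    rw [leftChain, dif_pos rfl]
    rfl
  | node l r ihl ihr =>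
    rename_i a b c
    intro H hac
    cases r with
    | leaf j =>
      have hab : a < b := l.lt
      rw [leftChain, dif_neg (by omega : ¬ a + 1 = b + 1)]
      rw [ihl (fun t ht => H t (by
        simp only [Paren.triplets, Finset.mem_union]; exact Or.inl (Or.inl ht))) hab]
      rfl
    | node r1 r2 =>
      rename_i m
      exfalso
      have hm := H (b, m, c) (by simp [Paren.triplets])
      have h1 := l.lt
      have h2 := r1.lt
      have h3 := r2.lt
      rcases hm with h | h | h <;> simp only at h <;> omega

theorem eq_rightChain : ∀ {a c : ℕ} (p : Paren a c), (∀ t ∈ p.triplets, memT c t) →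
    ∀ (hac : a < c), p = rightChain a c hac := by
  intro a c p
  induction p with
  | leaf i =>
    intro _ hac
    rw [rightChain, dif_pos rfl]
    rfl
  | node l r ihl ihr =>
    rename_i a b c
    intro H hac
    cases l with
    | leaf j =>
      have hbc : a + 1 < c := r.lt
      rw [rightChain, dif_neg (by omega : ¬ a + 1 = c)]
      rw [ihr (fun t ht => H t (by
        simp only [Paren.triplets, Finset.mem_union]; exact Or.inl (Or.inr ht))) hbc]
    | node l1 l2 =>
      rename_i m
      exfalso
      have hm := H (a, m, b) (by simp [Paren.triplets])
      have h1 := l1.lt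
      have h2 := l2.lt
      have h3 := r.lt
      rcases hm with h | h | h <;> simp only at h <;> omega

def fanP (n h : ℕ) (hn : 0 < n) (hh : h ≤ n) : Paren 0 n :=
  if h0 : h = 0 then leftChain 0 n hn
  else if hN : h = n then rightChain 0 n hn
  else .node (rightChain 0 h (by omega)) (leftChain h n (by omega))

theorem fanP_triplets (n h : ℕ) (hn : 0 < n) (hh : h ≤ n) :
    (fanP n h hn hh).triplets = fanSet n h := by
  rw [fanP, fanSet]
  split
  · next h0 =>
    rw [leftChain_triplets]
  · next h0 =>
    split
    · next hN =>
      rw [rightChain_triplets]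
    · next hN =>
      rw [Paren.triplets, rightChain_triplets, leftChain_triplets]

theorem fanSet_mem (n h : ℕ) : ∀ t ∈ fanSet n h, memT h t := by
  intro t ht
  rw [fanSet] at ht
  split_ifs at ht with h0 hN
  · subst h0
    simp only [Finset.mem_image, Finset.mem_Icc] at ht
    obtain ⟨i, _, rfl⟩ := ht
    left; rfl
  · subst hN
    simp only [Finset.mem_image, Finset.mem_Icc] at ht
    obtain ⟨i, _, rfl⟩ := ht
    right; right; rfl
  · simp only [Finset.mem_union, Finset.mem_image, Finset.mem_Icc,
      Finset.mem_singleton] at ht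
    rcases ht with (⟨i, _, rfl⟩ | ⟨i, _, rfl⟩) | rfl
    · right; right; rfl
    · left; rfl
    · right; left; rfl

theorem fanP_unique (n h : ℕ) (hn : 3 ≤ n) (hh : h ≤ n)
    (p : Paren 0 n) (H : ∀ t ∈ p.triplets, memT h t) :
    p = fanP n h (by omega) hh := by
  cases p with
  | leaf i => omega
  | node l r =>
    rename_i b
    have hb1 : 0 < b := l.lt
    have hb2 : b < n := r.lt
    have htop := H (0, b, n) (by simp [Paren.triplets])
    rcases htop with h0 | hb | hN
    · have h0' : h = 0 := h0
      subst h0'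
      rw [fanP, dif_pos rfl]
      exact eq_leftChain _ H _
    · have hb' : h = b := hb
      subst hb
      rw [fanP, dif_neg (by omega), dif_neg (by omega)]
      rw [eq_rightChain l (fun t ht => H t (by
            simp only [Paren.triplets, Finset.mem_union]; exact Or.inl (Or.inl ht))) hb1,
          eq_leftChain r (fun t ht => H t (by
            simp only [Paren.triplets, Finset.mem_union]; exact Or.inl (Or.inr ht))) hb2]
    · have hN' : h = n := hN
      subst hN
      rw [fanP, dif_neg (by omega), dif_pos rfl]
      exact eq_rightChain _ H _

/-- The fan-out ordering from `h` is the unique ordering all of whose `n-1`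
triplets contain the index `h`. -/
theorem fanout_unique_all_triplets_contain_h (n h : ℕ) (hn : 3 ≤ n) (hh : h ≤ n) :
    (∃! p : Paren 0 n, ∀ t ∈ p.triplets, memT h t) ∧
    (∀ p : Paren 0 n, (∀ t ∈ p.triplets, memT h t) → p.triplets = fanSet n h) := by
  have hn0 : 0 < n := by omega
  refine ⟨⟨fanP n h hn0 hh, ?_, ?_⟩, ?_⟩
  · intro t ht
    rw [fanP_triplets] at ht
    exact fanSet_mem n h t ht
  · intro p hp
    rw [fanP_unique n h hn hh p hp]
  · intro p hp
    rw [fanP_unique n h hn hh p hp, fanP_triplets]
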